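/- arXiv:2305.06017 — 2 statements merged into one kernel-verified Lean document; each statement's English description precedes it below -/
import Mathlib

section
/- Let X be the projective limit of a sequence (X_l)_{l∈ℕ} of Hausdorff, locally convex topological real vector spaces with continuous embeddings X_{l+1} ↪ X_l, let (Ω, 𝔄, ℙ) be a probability space, and let Y_i : Ω → X for i in an index set I be maps which are random variables (Borel measurable) in each of the spaces X_l. Then the family (Y_i)_{i∈I} is tight on X if and only if it is tight on X_l for every l ∈ ℕ. -/
open MeasureTheory ENNReal

/-- A family of maps `Y i : Ω → Z` into a topological space is *tight* if for every `δ > 0`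
there is a compact set `K ⊆ Z` such that for all `i` the event `{Y i ∉ K}` is measurable and
has probability less than `δ`. -/
def TightFamily {Ω Z : Type*} {I : Type*} [MeasurableSpace Ω] [TopologicalSpace Z]
    (P : Measure Ω) (Y : I → Ω → Z) : Prop :=
  ∀ δ : ℝ≥0∞, 0 < δ → ∃ K : Set Z, IsCompact K ∧
    ∀ i, MeasurableSet {ω | Y i ω ∉ K} ∧ P {ω | Y i ω ∉ K} < δ

/-! Tightness passes to continuous images, since a compact image in a Hausdorff space is
closed, hence Borel. Conversely, given compact `K l ⊆ X l` missed with probability `ε l`, where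
`∑ ε l < δ`, the set `⋂ l, f l ⁻¹' K l` is missed with probability less than `δ`; it is compact
because `y ↦ (f l y)_l` embeds the projective limit into `∏ l, X l` with closed range, the
compatible sequences. -/

open Set Topology

section Tightness

variable {Ω I : Type*} [MeasurableSpace Ω] {P : Measure Ω}

theorem TightFamily.comp_continuous {X W : Type*} [TopologicalSpace X] [TopologicalSpace W]
    [T2Space W] [MeasurableSpace W] [OpensMeasurableSpace W] {Z : I → Ω → X}
    (hZ : TightFamily P Z) {g : X → W} (hg : Continuous g) (hmeas : ∀ i, Measurable (g ∘ Z i)) :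
    TightFamily P fun i ω => g (Z i ω) := by
  intro δ hδ
  obtain ⟨K, hK, hKZ⟩ := hZ δ hδ
  refine ⟨g '' K, hK.image hg, fun i => ⟨hmeas i (hK.image hg).isClosed.measurableSet.compl, ?_⟩⟩
  have hsub : {ω | g (Z i ω) ∉ g '' K} ⊆ {ω | Z i ω ∉ K} := fun ω hω hmem =>
    hω (mem_image_of_mem g hmem)
  exact (measure_mono hsub).trans_lt (hKZ i).2

theorem TightFamily.of_isInducing_pi {ι : Type*} [Countable ι] {X : ι → Type*}
    [∀ l, TopologicalSpace (X l)] {Y : Type*} [TopologicalSpace Y] {f : ∀ l, Y → X l}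
    (hf : IsInducing fun y l => f l y) (hrange : IsClosed (range fun y l => f l y))
    {Z : I → Ω → Y} (h : ∀ l, TightFamily P fun i ω => f l (Z i ω)) : TightFamily P Z := by
  intro δ hδ
  obtain ⟨ε, hε, hεδ⟩ := ENNReal.exists_pos_sum_of_countable' hδ.ne' ι
  choose K hK hKZ using fun l => h l (ε l) (hε l)
  have hS : IsCompact (⋂ l, f l ⁻¹' K l) := by
    convert hf.isCompact_preimage hrange (isCompact_univ_pi hK) using 1
    ext y
    simp
  refine ⟨_, hS, fun i => ?_⟩
  have hmiss : {ω | Z i ω ∉ ⋂ l, f l ⁻¹' K l} = ⋃ l, {ω | f l (Z i ω) ∉ K l} := by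
    ext ω
    simp
  rw [hmiss]
  refine ⟨.iUnion fun l => (hKZ l i).1, ?_⟩
  calc P (⋃ l, {ω | f l (Z i ω) ∉ K l}) ≤ ∑' l, P {ω | f l (Z i ω) ∉ K l} := measure_iUnion_le _
    _ ≤ ∑' l, ε l := ENNReal.tsum_le_tsum fun l => (hKZ l i).2.le
    _ < δ := hεδ

end Tightness

theorem isClosed_setOf_forall_eq_comp_succ {X : ℕ → Type*} [∀ l, TopologicalSpace (X l)]
    [∀ l, T2Space (X l)] {e : ∀ l, X (l + 1) → X l} (he : ∀ l, Continuous (e l)) :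
    IsClosed {x : ∀ l, X l | ∀ l, x l = e l (x (l + 1))} := by
  rw [ofPred_forall]
  exact isClosed_iInter fun l => isClosed_eq (continuous_apply l) ((he l).comp (continuous_apply _))

theorem tightFamily_projectiveLimit_iff_general
    (X : ℕ → Type*) [∀ l, TopologicalSpace (X l)] [∀ l, AddCommGroup (X l)]
    [∀ l, Module ℝ (X l)] [∀ l, T2Space (X l)]
    [∀ l, MeasurableSpace (X l)] [∀ l, BorelSpace (X l)]
    (e : ∀ l, X (l + 1) →ₗ[ℝ] X l)
    (he_cont : ∀ l, Continuous (e l))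
    (Y : Type*) (f : ∀ l, Y → X l)
    (hf_compat : ∀ l y, f l y = e l (f (l + 1) y))
    (hf_surj : ∀ x : ∀ l, X l, (∀ l, x l = e l (x (l + 1))) → ∃ y, ∀ l, f l y = x l)
    [tY : TopologicalSpace Y]
    (htY : tY = ⨅ l, TopologicalSpace.induced (f l) inferInstance)
    {Ω : Type*} [MeasurableSpace Ω] (P : Measure Ω)
    {I : Type*} (Z : I → Ω → Y)
    (hmeas : ∀ i l, Measurable fun ω => f l (Z i ω)) :
    TightFamily P Z ↔ ∀ l, TightFamily P fun i ω => f l (Z i ω) := by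
  have hind : IsInducing fun y l => f l y := by
    subst htY
    exact inducing_iInf_to_pi f
  have hrange : range (fun y l => f l y) = {x : ∀ l, X l | ∀ l, x l = e l (x (l + 1))} :=
    Subset.antisymm (range_subset_iff.2 fun y l => hf_compat l y) fun x hx =>
      let ⟨y, hy⟩ := hf_surj x hx
      ⟨y, funext hy⟩
  refine ⟨fun h l => h.comp_continuous ((continuous_apply l).comp hind.continuous) (hmeas · l),
    TightFamily.of_isInducing_pi hind ?_⟩
  rw [hrange]
  exact isClosed_setOf_forall_eq_comp_succ (e := fun l => e l) he_cont

/-- Let `Y` be the projective limit of a sequence `(X l)` of Hausdorff, locally convex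
topological real vector spaces with continuous injective linear embeddings, and let
`(Z i)` be a family of maps `Ω → Y` on a probability space which are Borel random variables
in each of the spaces `X l`.  Then `(Z i)` is tight on `Y` if and only if it is tight on
`X l` for every `l`. -/
theorem tightFamily_projectiveLimit_iff
    (X : ℕ → Type*) [∀ l, TopologicalSpace (X l)] [∀ l, AddCommGroup (X l)]
    [∀ l, Module ℝ (X l)] [∀ l, T2Space (X l)]
    [∀ l, IsTopologicalAddGroup (X l)] [∀ l, ContinuousSMul ℝ (X l)]
    [∀ l, LocallyConvexSpace ℝ (X l)]
    [∀ l, MeasurableSpace (X l)] [∀ l, BorelSpace (X l)]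
    (e : ∀ l, X (l + 1) →ₗ[ℝ] X l)
    (he_cont : ∀ l, Continuous (e l))
    (he_inj : ∀ l, Function.Injective (e l))
    (Y : Type*) (f : ∀ l, Y → X l)
    (hf_compat : ∀ l y, f l y = e l (f (l + 1) y))
    (hf_inj : ∀ l, Function.Injective (f l))
    (hf_surj : ∀ x : ∀ l, X l, (∀ l, x l = e l (x (l + 1))) → ∃ y, ∀ l, f l y = x l)
    [tY : TopologicalSpace Y]
    (htY : tY = ⨅ l, TopologicalSpace.induced (f l) inferInstance)
    {Ω : Type*} [MeasurableSpace Ω] (P : Measure Ω) [IsProbabilityMeasure P]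
    {I : Type*} (Z : I → Ω → Y)
    (hmeas : ∀ i l, Measurable fun ω => f l (Z i ω)) :
    TightFamily P Z ↔ ∀ l, TightFamily P fun i ω => f l (Z i ω) :=
  tightFamily_projectiveLimit_iff_general X e he_cont Y f hf_compat hf_surj (tY := tY) htY P Z hmeas
end

section
/- Let X be a Hausdorff topological real vector space, (Y_i)_{i∈I} a family of X-valued Borel random variables on a probability space (Ω, 𝔄, ℙ), and (A_j)_{j∈ℕ} a measurable partition of Ω. If for every j ∈ ℕ the family (𝟙_{A_j}·Y_i)_{i∈I} is tight on X (where 𝟙_{A_j}·Y_i equals Y_i on A_j and 0 off A_j), then the family (Y_i)_{i∈I} is tight on X. -/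
open MeasureTheory ENNReal

/-!
On the piece `A j` the map `𝟙_{A j} · Y i` agrees with `Y i`. Given `δ`, choose compact sets
`K j` adapted to `A j` with error budgets `η j` summing to less than `δ / 2`, and `N` so that
the pieces `A j` with `j < N` miss less than `δ / 2` of the mass. Then `Y i` lies outside the
compact set `⋃_{j < N} K j` only off these pieces or where some `𝟙_{A j} · Y i` leaves `K j`.
-/

open Finset

theorem exists_measure_compl_biUnion_range_lt {Ω : Type*} [MeasurableSpace Ω] (μ : Measure Ω)
    [IsFiniteMeasure μ] {A : ℕ → Set Ω} (hA_meas : ∀ j, MeasurableSet (A j))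
    (hA_cover : ⋃ j, A j = Set.univ) {ε : ℝ≥0∞} (hε : 0 < ε) :
    ∃ N, μ (⋃ j ∈ range N, A j)ᶜ < ε := by
  set C : ℕ → Set Ω := fun n => (⋃ j ∈ range n, A j)ᶜ
  have hC_meas (n : ℕ) : MeasurableSet (C n) :=
    (Finset.measurableSet_biUnion _ fun j _ => hA_meas j).compl
  have hC_anti : Antitone C := fun m n hmn =>
    Set.compl_subset_compl.2 <| Set.biUnion_subset_biUnion_left <| by simpa using hmn
  have hC_empty : ⋂ n, C n = ∅ := by
    simp only [C, ← Set.compl_iUnion, Set.compl_empty_iff, Set.iUnion_eq_univ_iff]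
    intro ω
    obtain ⟨j, hj⟩ := Set.mem_iUnion.1 (hA_cover ▸ Set.mem_univ ω)
    exact ⟨j + 1, Set.mem_biUnion (Finset.self_mem_range_succ j) hj⟩
  have h_tendsto := tendsto_measure_iInter_atTop (μ := μ)
    (fun n => (hC_meas n).nullMeasurableSet) hC_anti ⟨0, measure_ne_top μ _⟩
  rw [hC_empty, measure_empty] at h_tendsto
  exact (h_tendsto.eventually_lt_const hε).exists

theorem setOf_notMem_biUnion_subset {Ω X ι : Type*} [Zero X] (Y : Ω → X) (A : ι → Set Ω)
    (K : ι → Set X) (s : Finset ι) :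
    {ω | Y ω ∉ ⋃ j ∈ s, K j} ⊆
      (⋃ j ∈ s, A j)ᶜ ∪ ⋃ j ∈ s, {ω | (A j).indicator Y ω ∉ K j} := by
  intro ω hω
  by_cases hω_cover : ω ∈ ⋃ j ∈ s, A j
  · obtain ⟨j, hj, hωj⟩ := Set.mem_iUnion₂.1 hω_cover
    refine Or.inr (Set.mem_biUnion hj ?_)
    rw [Set.mem_ofPred_eq, Set.indicator_of_mem hωj]
    exact fun hK => hω (Set.mem_biUnion hj hK)
  · exact Or.inl hω_cover

theorem measure_notMem_biUnion_le {Ω X ι : Type*} [MeasurableSpace Ω] [Zero X]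
    (μ : Measure Ω) (Y : Ω → X) (A : ι → Set Ω) (K : ι → Set X) (s : Finset ι) :
    μ {ω | Y ω ∉ ⋃ j ∈ s, K j} ≤
      μ (⋃ j ∈ s, A j)ᶜ + ∑ j ∈ s, μ {ω | (A j).indicator Y ω ∉ K j} :=
  calc μ {ω | Y ω ∉ ⋃ j ∈ s, K j}
      ≤ μ ((⋃ j ∈ s, A j)ᶜ ∪ ⋃ j ∈ s, {ω | (A j).indicator Y ω ∉ K j}) :=
        measure_mono (setOf_notMem_biUnion_subset Y A K s)
    _ ≤ μ (⋃ j ∈ s, A j)ᶜ + μ (⋃ j ∈ s, {ω | (A j).indicator Y ω ∉ K j}) :=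
        measure_union_le _ _
    _ ≤ μ (⋃ j ∈ s, A j)ᶜ + ∑ j ∈ s, μ {ω | (A j).indicator Y ω ∉ K j} := by
        gcongr
        exact measure_biUnion_finset_le _ _

theorem tightFamily_of_partition_general
    (X : Type*) [TopologicalSpace X] [AddCommGroup X] [T2Space X]
    [MeasurableSpace X] [BorelSpace X]
    {Ω : Type*} [MeasurableSpace Ω] (P : Measure Ω) [IsProbabilityMeasure P]
    {I : Type*} (Y : I → Ω → X) (hY : ∀ i, Measurable (Y i))
    (A : ℕ → Set Ω) (hA_meas : ∀ j, MeasurableSet (A j))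
    (hA_cover : ⋃ j, A j = Set.univ)
    (htight : ∀ j, TightFamily P fun i => (A j).indicator (Y i)) :
    TightFamily P Y := by
  intro δ hδ
  have hδ2 : 0 < δ / 2 := ENNReal.half_pos hδ.ne'
  obtain ⟨η, hη_pos, hη_sum⟩ := ENNReal.exists_pos_sum_of_countable hδ2.ne' ℕ
  choose K hK_compact hK using fun j => htight j (η j) (ENNReal.coe_pos.2 (hη_pos j))
  obtain ⟨N, hN⟩ := exists_measure_compl_biUnion_range_lt P hA_meas hA_cover hδ2
  have hK_union : IsCompact (⋃ j ∈ range N, K j) :=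
    (range N).isCompact_biUnion fun j _ => hK_compact j
  refine ⟨_, hK_union, fun i => ⟨hY i hK_union.isClosed.measurableSet.compl, ?_⟩⟩
  have h_sum : ∑ j ∈ range N, P {ω | (A j).indicator (Y i) ω ∉ K j} < δ / 2 :=
    calc ∑ j ∈ range N, P {ω | (A j).indicator (Y i) ω ∉ K j}
        ≤ ∑ j ∈ range N, (η j : ℝ≥0∞) := sum_le_sum fun j _ => (hK j i).2.le
      _ ≤ ∑' j, (η j : ℝ≥0∞) := ENNReal.sum_le_tsum _
      _ < δ / 2 := hη_sum
  calc P {ω | Y i ω ∉ ⋃ j ∈ range N, K j}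
      ≤ P (⋃ j ∈ range N, A j)ᶜ + ∑ j ∈ range N, P {ω | (A j).indicator (Y i) ω ∉ K j} :=
        measure_notMem_biUnion_le P (Y i) A K (range N)
    _ < δ / 2 + δ / 2 := ENNReal.add_lt_add hN h_sum
    _ = δ := ENNReal.add_halves δ

/-- Let `X` be a Hausdorff topological real vector space, `(Y i)` a family of `X`-valued Borel
random variables on a probability space and `(A j)_{j ∈ ℕ}` a measurable partition of `Ω`.
If for every `j` the family `(𝟙_{A j} · Y i)_i` is tight on `X`, then `(Y i)_i` is tight
on `X`. -/
theorem tightFamily_of_partition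
    (X : Type*) [TopologicalSpace X] [AddCommGroup X] [Module ℝ X] [T2Space X]
    [IsTopologicalAddGroup X] [ContinuousSMul ℝ X]
    [MeasurableSpace X] [BorelSpace X]
    {Ω : Type*} [MeasurableSpace Ω] (P : Measure Ω) [IsProbabilityMeasure P]
    {I : Type*} (Y : I → Ω → X) (hY : ∀ i, Measurable (Y i))
    (A : ℕ → Set Ω) (hA_meas : ∀ j, MeasurableSet (A j))
    (hA_disj : Pairwise (Function.onFun Disjoint A)) (hA_cover : ⋃ j, A j = Set.univ)
    (htight : ∀ j, TightFamily P fun i => (A j).indicator (Y i)) :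
    TightFamily P Y :=
  tightFamily_of_partition_general X P Y hY A hA_meas hA_cover htight
end
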